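/- With A = (0,0), O_k = (x_k,0), r_k = x_k − 1, x_k → ∞, and B_k as above, the ratio ‖A−O_k‖/r_k converges to 1 and ‖A−B_k‖·‖A−O_k‖/r_k converges to ‖A−B‖ = 2, where B = (2,0). Consequently, for any fixed M ∈ ℝ² and n ≠ 0, the left and right sides of the Cartesian oval equation ±‖A−M‖ + (‖A−O_k‖/r_k)‖B_k−M‖ = ‖A−B_k‖‖A−O_k‖/(r_k n) converge to those of ±‖A−M‖ + ‖B−M‖ = ‖A−B‖/n. -/

import Mathlib

open Filter

noncomputable def pt (a b : ℝ) : EuclideanSpace ℝ (Fin 2) := WithLp.toLp 2 ![a, b]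

lemma norm_pt (a : ℝ) : ‖pt a 0‖ = |a| := by
  simp [pt, EuclideanSpace.norm_eq, Fin.sum_univ_two, Real.sqrt_sq_eq_abs]

lemma pt_zero : pt 0 0 = 0 := by
  ext i; fin_cases i <;> simp [pt]

lemma pt_sub (a b : ℝ) : pt a 0 - pt b 0 = pt (a - b) 0 := by
  ext i; fin_cases i <;> simp [pt]

lemma pt_smul (c a : ℝ) : c • pt a 0 = pt (c * a) 0 := by
  ext i; fin_cases i <;> simp [pt]

lemma tendsto_pt {f : ℕ → ℝ} {c : ℝ} (h : Filter.Tendsto f Filter.atTop (nhds c)) :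
    Filter.Tendsto (fun k => pt (f k) 0) Filter.atTop (nhds (pt c 0)) := by
  rw [tendsto_iff_norm_sub_tendsto_zero] at h ⊢
  simpa [pt_sub, norm_pt] using h

theorem oval_equation_degenerates (x : ℕ → ℝ)
    (hx : Tendsto x atTop atTop)
    (A : EuclideanSpace ℝ (Fin 2)) (hA : A = pt 0 0)
    (O : ℕ → EuclideanSpace ℝ (Fin 2)) (hO : ∀ k, O k = pt (x k) 0)
    (r : ℕ → ℝ) (hr : ∀ k, r k = x k - 1)
    (B : ℕ → EuclideanSpace ℝ (Fin 2))
    (hB : ∀ k, B k = A + (1 - (r k) ^ 2 / ‖A - O k‖ ^ 2) • (O k - A))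
    (Blim : EuclideanSpace ℝ (Fin 2)) (hBlim : Blim = pt 2 0) :
    Tendsto (fun k => ‖A - O k‖ / r k) atTop (nhds 1) ∧
    Tendsto (fun k => ‖A - B k‖ * ‖A - O k‖ / r k) atTop (nhds ‖A - Blim‖) ∧
    ‖A - Blim‖ = 2 ∧
    ∀ (M : EuclideanSpace ℝ (Fin 2)) (n ε : ℝ), n ≠ 0 → (ε = 1 ∨ ε = -1) →
      Tendsto (fun k => ε * ‖A - M‖ + (‖A - O k‖ / r k) * ‖B k - M‖) atTop
        (nhds (ε * ‖A - M‖ + ‖Blim - M‖)) ∧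
      Tendsto (fun k => ‖A - B k‖ * ‖A - O k‖ / (r k * n)) atTop
        (nhds (‖A - Blim‖ / n)) := by
  have hev : ∀ᶠ k in atTop, 2 ≤ x k := hx.eventually_ge_atTop 2
  -- basic norms
  have hnAO : ∀ k, ‖A - O k‖ = |x k| := by
    intro k
    rw [hA, hO, pt_sub, norm_pt]
    simp
  have hnAO' : ∀ᶠ k in atTop, ‖A - O k‖ = x k := by
    filter_upwards [hev] with k hk
    rw [hnAO, abs_of_nonneg (by linarith)]
  -- B k explicit
  have hBk : ∀ᶠ k in atTop, B k = pt ((2 * x k - 1) / x k) 0 := by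
    filter_upwards [hev] with k hk
    have hx0 : x k ≠ 0 := by linarith
    have key : (1 - (x k - 1) ^ 2 / |x k| ^ 2) * x k = (2 * x k - 1) / x k := by
      rw [sq_abs]
      field_simp
      ring
    rw [hB k, hA, pt_zero, hO, zero_sub, norm_neg, norm_pt, sub_zero, zero_add, pt_smul, hr, key]
  -- limit of (x-1)⁻¹
  have hsub : Tendsto (fun k => x k - 1) atTop atTop := by
    have := tendsto_atTop_add_const_right atTop (-1) hx
    simpa [sub_eq_add_neg] using this
  have hinv : Tendsto (fun k => (x k - 1)⁻¹) atTop (nhds 0) :=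
    tendsto_inv_atTop_zero.comp hsub
  -- part 1
  have h1 : Tendsto (fun k => ‖A - O k‖ / r k) atTop (nhds 1) := by
    have : Tendsto (fun k => 1 + (x k - 1)⁻¹) atTop (nhds 1) := by
      simpa using hinv.const_add 1
    refine this.congr' ?_
    filter_upwards [hnAO', hev] with k hk h2k
    have hne : x k - 1 ≠ 0 := by linarith
    rw [hr, hk]
    field_simp
    ring
  have hABlim : ‖A - Blim‖ = 2 := by
    rw [hA, hBlim, pt_sub, norm_pt]
    norm_num
  have hnAB : ∀ᶠ k in atTop, ‖A - B k‖ = (2 * x k - 1) / x k := by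
    filter_upwards [hBk, hev] with k hk h2k
    have hnn : 0 ≤ (2 * x k - 1) / x k := div_nonneg (by linarith) (by linarith)
    rw [hA, hk, pt_sub, norm_pt, zero_sub, abs_neg, abs_of_nonneg hnn]
  have h2 : Tendsto (fun k => ‖A - B k‖ * ‖A - O k‖ / r k) atTop (nhds ‖A - Blim‖) := by
    rw [hABlim]
    have : Tendsto (fun k => 2 + (x k - 1)⁻¹) atTop (nhds 2) := by
      simpa using hinv.const_add 2
    refine this.congr' ?_
    filter_upwards [hnAB, hnAO', hev] with k hk hk' h2k
    have hne : x k - 1 ≠ 0 := by linarith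
    have hx0 : x k ≠ 0 := by linarith
    rw [hr, hk, hk']
    field_simp
    ring
  have hratio : Tendsto (fun k => (2 * x k - 1) / x k) atTop (nhds 2) := by
    have : Tendsto (fun k => 2 - (x k)⁻¹) atTop (nhds 2) := by
      simpa using ((tendsto_inv_atTop_zero.comp hx).const_sub 2)
    refine this.congr' ?_
    filter_upwards [hev] with k h2k
    have hx0 : x k ≠ 0 := by linarith
    field_simp
  have hBt : Tendsto B atTop (nhds Blim) := by
    rw [hBlim]
    exact Tendsto.congr' (EventuallyEq.symm hBk) (tendsto_pt hratio)
  refine ⟨h1, h2, hABlim, ?_⟩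
  intro M n ε hn hε
  constructor
  · have hBM : Tendsto (fun k => ‖B k - M‖) atTop (nhds ‖Blim - M‖) :=
      (hBt.sub_const M).norm
    simpa using tendsto_const_nhds.add (h1.mul hBM)
  · simpa [div_div] using h2.div_const n
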